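/- arXiv:1708.05690 — 6 statements merged into one kernel-verified Lean document; each statement's English description precedes it below -/
import Mathlib

section
/- Let G be a finite simple graph on vertex set N with at least one vertex, and define c : N × N → ℝ by c(i,i) = 1, c(i,j) = 0.9 if i and j are adjacent in G, and c(i,j) = 0.6 if i ≠ j are not adjacent. Then for every k, G has a dominating set D with |D| = k if and only if there exists a set M ⊆ N with |M| = k such that ρ(M) ≥ 0.9. -/
open Finset

theorem forall_exists_eq_or_iff_forall_notMem {α : Type*} (r : α → α → Prop) (D : Finset α) :
    (∀ i, ∃ j ∈ D, j = i ∨ r j i) ↔ ∀ v ∉ D, ∃ u ∈ D, r u v := by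
  constructor
  · intro h v hv
    obtain ⟨u, hu, rfl | huv⟩ := h v
    · exact absurd hu hv
    · exact ⟨u, hu, huv⟩
  · intro h i
    by_cases hi : i ∈ D
    · exact ⟨i, hi, Or.inl rfl⟩
    · obtain ⟨u, hu, hui⟩ := h i hi
      exact ⟨u, hu, Or.inr hui⟩

theorem Finset.nonempty_of_forall_notMem_exists {α : Type*} [Nonempty α] {r : α → α → Prop}
    {D : Finset α} (hD : ∀ v ∉ D, ∃ u ∈ D, r u v) : D.Nonempty := by
  obtain ⟨v⟩ := ‹Nonempty α›
  by_cases hv : v ∈ D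
  · exact ⟨v, hv⟩
  · obtain ⟨u, hu, -⟩ := hD v hv
    exact ⟨u, hu⟩

theorem le_inf'_univ_sup'_iff {α β : Type*} [Fintype α] [Nonempty α] [LinearOrder β]
    (f : α → α → β) (a : β) (M : Finset α) (hM : M.Nonempty) :
    a ≤ univ.inf' univ_nonempty (fun i => M.sup' hM (fun j => f j i)) ↔
      ∀ i, ∃ j ∈ M, a ≤ f j i := by
  simp only [le_inf'_iff, mem_univ, true_implies, le_sup'_iff]

theorem nine_tenths_le_similarity_iff {N : Type*} (G : SimpleGraph N) {c : N → N → ℝ}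
    (hc1 : ∀ i, c i i = 1)
    (hc2 : ∀ i j, G.Adj i j → c i j = 0.9)
    (hc3 : ∀ i j, i ≠ j → ¬ G.Adj i j → c i j = 0.6) (j i : N) :
    0.9 ≤ c j i ↔ j = i ∨ G.Adj j i := by
  by_cases hji : j = i
  · subst hji
    rw [hc1]
    norm_num
  by_cases hadj : G.Adj j i
  · simp [hc2 j i hadj, hadj]
  · rw [hc3 j i hji hadj]
    norm_num [hji, hadj]

theorem dominating_set_iff_rho_general {N : Type*} [Fintype N] [Nonempty N]
    (G : SimpleGraph N) (c : N → N → ℝ)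
    (hc1 : ∀ i, c i i = 1)
    (hc2 : ∀ i j, G.Adj i j → c i j = 0.9)
    (hc3 : ∀ i j, i ≠ j → ¬ G.Adj i j → c i j = 0.6)
    (k : ℕ) :
    (∃ D : Finset N, D.card = k ∧ ∀ v ∉ D, ∃ u ∈ D, G.Adj u v) ↔
    (∃ M : Finset N, ∃ hM : M.Nonempty, M.card = k ∧
      0.9 ≤ Finset.univ.inf' Finset.univ_nonempty
              (fun i => M.sup' hM (fun j => c j i))) := by
  have hρ (M : Finset N) (hM : M.Nonempty) :
      0.9 ≤ univ.inf' univ_nonempty (fun i => M.sup' hM (fun j => c j i)) ↔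
        ∀ v ∉ M, ∃ u ∈ M, G.Adj u v := by
    simp only [le_inf'_univ_sup'_iff, nine_tenths_le_similarity_iff G hc1 hc2 hc3]
    exact forall_exists_eq_or_iff_forall_notMem G.Adj M
  constructor
  · rintro ⟨D, hcard, hdom⟩
    have hD : D.Nonempty := nonempty_of_forall_notMem_exists hdom
    exact ⟨D, hD, hcard, (hρ D hD).2 hdom⟩
  · rintro ⟨M, hM, hcard, hM_rho⟩
    exact ⟨M, hcard, (hρ M hM).1 hM_rho⟩

/-- Let `G` be a finite simple graph on a nonempty vertex set `N`
and let `c(i,i) = 1`, `c(i,j) = 0.9` if `i ~ j`, and `c(i,j) = 0.6` if `i ≠ j`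
are non-adjacent.  Then for every `k`, `G` has a dominating set `D` with
`|D| = k` iff there exists a (nonempty, since ρ is defined only for nonempty
sets) `M ⊆ N` with `|M| = k` and `ρ(M) ≥ 0.9`, where
`ρ(M) = min_{i∈N} max_{j∈M} c(j,i)`. -/
theorem dominating_set_iff_rho {N : Type*} [Fintype N] [DecidableEq N] [Nonempty N]
    (G : SimpleGraph N) (c : N → N → ℝ)
    (hc1 : ∀ i, c i i = 1)
    (hc2 : ∀ i j, G.Adj i j → c i j = 0.9)
    (hc3 : ∀ i j, i ≠ j → ¬ G.Adj i j → c i j = 0.6)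
    (k : ℕ) :
    (∃ D : Finset N, D.card = k ∧ ∀ v ∉ D, ∃ u ∈ D, G.Adj u v) ↔
    (∃ M : Finset N, ∃ hM : M.Nonempty, M.card = k ∧
      0.9 ≤ Finset.univ.inf' Finset.univ_nonempty
              (fun i => M.sup' hM (fun j => c j i))) :=
  dominating_set_iff_rho_general G c hc1 hc2 hc3 k
end

section
/- Let G be a finite simple graph on vertex set N with n vertices (n ≥ 1), and define c : N × N → ℝ by c(i,i) = 1, c(i,j) = 0.9 if i and j are adjacent in G, and c(i,j) = 0.6 if i ≠ j are not adjacent. Then for every k ≤ n, G has a dominating set D with |D| = k if and only if there exists a set M ⊆ N with |M| = k such that ψ(M) ≥ k + 0.9·(n − k). -/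
/-!
For `i ∈ M` the best similarity `c(M, i)` is `1`, for `i ∉ M` it is `0.9` or `0.6` according as `i`
has a neighbour in `M` or not. Hence `ψ(M) = |M| + 0.9 (n - |M|) - 0.3 u`, where `u` counts the
vertices that `M` fails to dominate, and the bound `ψ(M) ≥ |M| + 0.9 (n - |M|)` says exactly `u = 0`.
-/

open Finset

theorem Finset.sum_ite_mem_univ {N : Type*} [Fintype N] [DecidableEq N] (s : Finset N) (a b : ℝ) :
    ∑ i, (if i ∈ s then a else b) = #s * a + (Fintype.card N - #s) * b := by
  rw [sum_ite, filter_mem_eq_inter, univ_inter, filter_not, filter_mem_eq_inter, univ_inter,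
    ← compl_eq_univ_sdiff, sum_const, sum_const, card_compl, nsmul_eq_mul, nsmul_eq_mul,
    Nat.cast_sub (card_le_univ s)]

theorem Finset.nonempty_of_forall_not_mem_exists_adj {N : Type*} [Nonempty N] {G : SimpleGraph N}
    {D : Finset N} (hD : ∀ v ∉ D, ∃ u ∈ D, G.Adj u v) : D.Nonempty := by
  obtain ⟨v⟩ := ‹Nonempty N›
  by_cases hv : v ∈ D
  · exact ⟨v, hv⟩
  · obtain ⟨u, hu, -⟩ := hD v hv
    exact ⟨u, hu⟩

structure IsDominationSimilarity {N : Type*} (G : SimpleGraph N) (c : N → N → ℝ) : Prop where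
  apply_self : ∀ i, c i i = 1
  apply_of_adj : ∀ i j, G.Adj i j → c i j = 0.9
  apply_of_not_adj : ∀ i j, i ≠ j → ¬ G.Adj i j → c i j = 0.6

namespace IsDominationSimilarity

variable {N : Type*} {G : SimpleGraph N} {c : N → N → ℝ} {S : Finset N} {i : N}

theorem le_nine_tenths (hc : IsDominationSimilarity G c) {j : N} (hji : j ≠ i) : c j i ≤ 0.9 := by
  by_cases hadj : G.Adj j i
  · exact (hc.apply_of_adj j i hadj).le
  · rw [hc.apply_of_not_adj j i hji hadj]
    norm_num

theorem le_one (hc : IsDominationSimilarity G c) (j : N) : c j i ≤ 1 := by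
  by_cases hji : j = i
  · rw [hji, hc.apply_self]
  · linarith [hc.le_nine_tenths hji]

theorem sup'_eq_one (hc : IsDominationSimilarity G c) (hS : S.Nonempty) (hi : i ∈ S) :
    S.sup' hS (c · i) = 1 :=
  le_antisymm (sup'_le _ _ fun j _ => hc.le_one j) ((hc.apply_self i).ge.trans (le_sup' (c · i) hi))

theorem sup'_le_nine_tenths (hc : IsDominationSimilarity G c) (hS : S.Nonempty) (hi : i ∉ S) :
    S.sup' hS (c · i) ≤ 0.9 :=
  sup'_le _ _ fun _ hj => hc.le_nine_tenths (ne_of_mem_of_not_mem hj hi)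

theorem sup'_eq_nine_tenths (hc : IsDominationSimilarity G c) (hS : S.Nonempty) (hi : i ∉ S)
    {u : N} (hu : u ∈ S) (hadj : G.Adj u i) : S.sup' hS (c · i) = 0.9 :=
  le_antisymm (hc.sup'_le_nine_tenths hS hi) ((hc.apply_of_adj u i hadj).ge.trans (le_sup' (c · i) hu))

theorem sup'_eq_three_fifths (hc : IsDominationSimilarity G c) (hS : S.Nonempty) (hi : i ∉ S)
    (hnadj : ∀ u ∈ S, ¬ G.Adj u i) : S.sup' hS (c · i) = 0.6 :=
  sup'_eq_of_forall hS _ fun u hu =>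
    hc.apply_of_not_adj u i (ne_of_mem_of_not_mem hu hi) (hnadj u hu)

variable [Fintype N]

theorem sum_sup'_eq_of_dominating (hc : IsDominationSimilarity G c) (hS : S.Nonempty)
    (hdom : ∀ v ∉ S, ∃ u ∈ S, G.Adj u v) :
    ∑ i, S.sup' hS (c · i) = #S + 0.9 * (Fintype.card N - #S) := by
  classical
  calc ∑ i, S.sup' hS (c · i) = ∑ i, (if i ∈ S then 1 else 0.9) := by
        refine sum_congr rfl fun i _ => ?_
        split_ifs with hi
        · exact hc.sup'_eq_one hS hi
        · obtain ⟨u, hu, hadj⟩ := hdom i hi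
          exact hc.sup'_eq_nine_tenths hS hi hu hadj
    _ = #S + 0.9 * (Fintype.card N - #S) := by rw [sum_ite_mem_univ]; ring

theorem sum_sup'_lt_of_not_dominated (hc : IsDominationSimilarity G c) (hS : S.Nonempty) {v : N}
    (hv : v ∉ S) (hnadj : ∀ u ∈ S, ¬ G.Adj u v) :
    ∑ i, S.sup' hS (c · i) < #S + 0.9 * (Fintype.card N - #S) := by
  classical
  calc ∑ i, S.sup' hS (c · i) < ∑ i, (if i ∈ S then 1 else 0.9) := by
        refine sum_lt_sum (fun i _ => ?_) ⟨v, mem_univ v, ?_⟩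
        · split_ifs with hi
          · exact (hc.sup'_eq_one hS hi).le
          · exact hc.sup'_le_nine_tenths hS hi
        · rw [if_neg hv, hc.sup'_eq_three_fifths hS hv hnadj]
          norm_num
    _ = #S + 0.9 * (Fintype.card N - #S) := by rw [sum_ite_mem_univ]; ring

end IsDominationSimilarity

theorem dominating_set_iff_psi_general {N : Type*} [Fintype N] [Nonempty N]
    (G : SimpleGraph N) (c : N → N → ℝ)
    (hc1 : ∀ i, c i i = 1)
    (hc2 : ∀ i j, G.Adj i j → c i j = 0.9)
    (hc3 : ∀ i j, i ≠ j → ¬ G.Adj i j → c i j = 0.6)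
    (k : ℕ) :
    (∃ D : Finset N, D.card = k ∧ ∀ v ∉ D, ∃ u ∈ D, G.Adj u v) ↔
    (∃ M : Finset N, ∃ hM : M.Nonempty, M.card = k ∧
      (k : ℝ) + 0.9 * ((Fintype.card N : ℝ) - (k : ℝ)) ≤
        ∑ i : N, M.sup' hM (fun j => c j i)) := by
  have hc : IsDominationSimilarity G c := ⟨hc1, hc2, hc3⟩
  constructor
  · rintro ⟨D, rfl, hdom⟩
    have hD := nonempty_of_forall_not_mem_exists_adj hdom
    exact ⟨D, hD, rfl, (hc.sum_sup'_eq_of_dominating hD hdom).ge⟩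
  · rintro ⟨M, hM, rfl, hψ⟩
    refine ⟨M, rfl, fun v hv => ?_⟩
    by_contra! hnadj
    exact (hc.sum_sup'_lt_of_not_dominated hM hv hnadj).not_ge hψ

/-- Let `G` be a finite simple graph on a nonempty vertex set `N`
with `n` vertices and let `c(i,i) = 1`, `c(i,j) = 0.9` if `i ~ j`, and
`c(i,j) = 0.6` if `i ≠ j` are non-adjacent.  Then for every `k ≤ n`, `G` has a
dominating set `D` with `|D| = k` iff there exists a (nonempty, since ψ is
defined only for nonempty sets) `M ⊆ N` with `|M| = k` and
`ψ(M) ≥ k + 0.9·(n − k)`, where `ψ(M) = Σ_{i∈N} max_{j∈M} c(j,i)`. -/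
theorem dominating_set_iff_psi {N : Type*} [Fintype N] [DecidableEq N] [Nonempty N]
    (G : SimpleGraph N) (c : N → N → ℝ)
    (hc1 : ∀ i, c i i = 1)
    (hc2 : ∀ i j, G.Adj i j → c i j = 0.9)
    (hc3 : ∀ i j, i ≠ j → ¬ G.Adj i j → c i j = 0.6)
    (k : ℕ) (hk : k ≤ Fintype.card N) :
    (∃ D : Finset N, D.card = k ∧ ∀ v ∉ D, ∃ u ∈ D, G.Adj u v) ↔
    (∃ M : Finset N, ∃ hM : M.Nonempty, M.card = k ∧
      (k : ℝ) + 0.9 * ((Fintype.card N : ℝ) - (k : ℝ)) ≤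
        ∑ i : N, M.sup' hM (fun j => c j i)) :=
  dominating_set_iff_psi_general G c hc1 hc2 hc3 k
end

section
/- For the pairwise-similarity TU game ν and the allocation x_i = (1/2) · Σ_{j ∈ N, j ≠ i} c(i,j), the excess of every coalition equals the excess of its complement: for every S ⊆ N, ν(S) − Σ_{i ∈ S} x_i = ν(N \ S) − Σ_{i ∈ N \ S} x_i. -/
/-!
Twice the excess of `T` is `∑_{i ∈ T} (∑_{j ∈ T} c i j - ∑_j c i j) = -∑_{i ∈ T} ∑_{j ∉ T} c i j`:
the diagonal terms `c i i` cancel between `ν` and `x`, and only the weight of the cut between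
`T` and its complement remains. By symmetry of `c` this cut weight is the same for `Tᶜ`.
-/

open Finset

namespace Finset

variable {α M : Type*} [DecidableEq α]

theorem sum_offDiag_eq_sum_sum_sub_sum_diag [AddCommGroup M] (s : Finset α) (f : α → α → M) :
    ∑ p ∈ s.offDiag, f p.1 p.2 = ∑ i ∈ s, ∑ j ∈ s, f i j - ∑ i ∈ s, f i i := by
  rw [eq_sub_iff_add_eq', ← sum_diag s (fun p => f p.1 p.2), ← sum_union (disjoint_diag_offDiag s),
    diag_union_offDiag, sum_product]

variable [Fintype α]

theorem sum_sum_compl_comm [AddCommMonoid M] {f : α → α → M} (hf : ∀ i j, f i j = f j i) (s : Finset α) :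
    ∑ i ∈ s, ∑ j ∈ sᶜ, f i j = ∑ i ∈ sᶜ, ∑ j ∈ s, f i j := by
  rw [sum_comm]
  simp only [hf]

end Finset

theorem excess_eq_neg_half_cut {N : Type*} [Fintype N] [DecidableEq N] (c : N → N → ℝ)
    (ν : Finset N → ℝ) (hν : ∀ S : Finset N, ν S = (∑ p ∈ S.offDiag, c p.1 p.2) / 2)
    (x : N → ℝ) (hx : ∀ i, x i = (1 / 2) * ∑ j ∈ univ.erase i, c i j) (T : Finset N) :
    ν T - ∑ i ∈ T, x i = -(∑ i ∈ T, ∑ j ∈ Tᶜ, c i j) / 2 := by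
  have hrow : ∀ i, ∑ j ∈ Tᶜ, c i j = ∑ j, c i j - ∑ j ∈ T, c i j := fun i => by
    rw [compl_eq_univ_sdiff, sum_sdiff_eq_sub (subset_univ T)]
  simp only [hν, hx, sum_offDiag_eq_sum_sum_sub_sum_diag, sum_erase_eq_sub (mem_univ _), hrow,
    ← mul_sum, sum_sub_distrib]
  ring

theorem excess_eq_complement_excess_general {N : Type*} [Fintype N] [DecidableEq N]
    (c : N → N → ℝ) (hsym : ∀ i j, c i j = c j i)
    (ν : Finset N → ℝ)
    (hν : ∀ S : Finset N, ν S = (∑ p ∈ S.offDiag, c p.1 p.2) / 2)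
    (x : N → ℝ)
    (hx : ∀ i, x i = (1 / 2) * ∑ j ∈ Finset.univ.erase i, c i j)
    (S : Finset N) :
    ν S - ∑ i ∈ S, x i = ν (Finset.univ \ S) - ∑ i ∈ Finset.univ \ S, x i := by
  rw [← compl_eq_univ_sdiff, excess_eq_neg_half_cut c ν hν x hx, excess_eq_neg_half_cut c ν hν x hx,
    compl_compl, sum_sum_compl_comm hsym]

/-- For the pairwise-similarity TU game
`ν(S) = Σ_{{i,j} ⊆ S, i ≠ j} c(i,j)` (with `c` symmetric) and the allocation
`x_i = (1/2) · Σ_{j ≠ i} c(i,j)`, the excess of every coalition equals the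
excess of its complement:
`ν(S) − Σ_{i∈S} x_i = ν(N \ S) − Σ_{i∈N\S} x_i` for every `S ⊆ N`. -/
theorem excess_eq_complement_excess {N : Type*} [Fintype N] [DecidableEq N]
    [Nonempty N]
    (c : N → N → ℝ) (hsym : ∀ i j, c i j = c j i)
    (ν : Finset N → ℝ)
    (hν : ∀ S : Finset N, ν S = (∑ p ∈ S.offDiag, c p.1 p.2) / 2)
    (x : N → ℝ)
    (hx : ∀ i, x i = (1 / 2) * ∑ j ∈ Finset.univ.erase i, c i j)
    (S : Finset N) :
    ν S - ∑ i ∈ S, x i = ν (Finset.univ \ S) - ∑ i ∈ Finset.univ \ S, x i :=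
  excess_eq_complement_excess_general c hsym ν hν x hx S
end

section
/- For the pairwise-similarity TU game ν and the allocation x_i = (1/2) · Σ_{j ∈ N, j ≠ i} c(i,j), every player has equal propensity to disrupt: for every i ∈ N, Σ_{j ∈ N, j ≠ i} x_j − ν(N \ {i}) = x_i − ν({i}). (Since ν({i}) = 0, each player's propensity to disrupt, defined as the ratio (Σ_{j≠i} x_j − ν(N\{i})) / (x_i − ν({i})), equals 1 whenever x_i ≠ 0.) -/
/-!
Summing the allocation over all players counts every ordered pair once with weight 1/2, so
`∑ x = ν(N)`. Removing player `i` from `N` removes exactly the pairs through `i`, which by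
symmetry have total `2 x_i`; hence `∑_{j ≠ i} x_j = ν(N) - x_i = ν(N \ {i}) + x_i`, while `ν({i}) = 0`.
-/

open Finset

namespace Finset

variable {α M : Type*} [DecidableEq α]

theorem sum_offDiag_eq_sum_sum_erase [AddCommMonoid M] (s : Finset α) (f : α → α → M) :
    ∑ p ∈ s.offDiag, f p.1 p.2 = ∑ j ∈ s, ∑ k ∈ s.erase j, f j k :=
  sum_finset_product' _ _ _ fun p => by simp only [mem_offDiag, mem_erase]; tauto

theorem sum_offDiag_eq_sum_offDiag_erase_add [AddCommMonoid M] {s : Finset α} {i : α}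
    (hi : i ∈ s) (f : α → α → M) :
    ∑ p ∈ s.offDiag, f p.1 p.2 =
      ∑ p ∈ (s.erase i).offDiag, f p.1 p.2 + ∑ j ∈ s.erase i, (f i j + f j i) := by
  conv_lhs => rw [← insert_erase hi, offDiag_insert (notMem_erase i s)]
  rw [sum_union (by grind [disjoint_left]), sum_union (by grind [disjoint_left]),
    sum_product, sum_product_right, sum_singleton, sum_singleton, sum_add_distrib, add_assoc]

end Finset

theorem equal_propensity_to_disrupt_general {N : Type*} [Fintype N] [DecidableEq N]
    (c : N → N → ℝ) (hsym : ∀ i j, c i j = c j i)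
    (ν : Finset N → ℝ)
    (hν : ∀ S : Finset N, ν S = (∑ p ∈ S.offDiag, c p.1 p.2) / 2)
    (x : N → ℝ)
    (hx : ∀ i, x i = (1 / 2) * ∑ j ∈ Finset.univ.erase i, c i j)
    (i : N) :
    ∑ j ∈ Finset.univ.erase i, x j - ν (Finset.univ.erase i) = x i - ν {i} := by
  have h_sum_x : ∑ j, x j = ν univ := by
    simp only [hx, hν, ← mul_sum, sum_offDiag_eq_sum_sum_erase]
    ring
  have h_ν_univ : ν univ = ν (univ.erase i) + 2 * x i := by
    have h_pair : ∀ j ∈ univ.erase i, c i j + c j i = 2 * c i j := fun j _ => by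
      rw [hsym j i]; ring
    rw [hν, hν, hx, sum_offDiag_eq_sum_offDiag_erase_add (mem_univ i), sum_congr rfl h_pair,
      ← mul_sum]
    ring
  have h_ν_singleton : ν {i} = 0 := by
    rw [hν, offDiag_singleton, sum_empty, zero_div]
  rw [sum_erase_eq_sub (mem_univ i), h_sum_x, h_ν_univ, h_ν_singleton]
  ring

/-- For the pairwise-similarity TU game
`ν(S) = Σ_{{i,j} ⊆ S, i ≠ j} c(i,j)` (with `c` symmetric) and the allocation
`x_i = (1/2) · Σ_{j ≠ i} c(i,j)`, every player has equal propensity to disrupt: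
for every `i`, `Σ_{j ≠ i} x_j − ν(N \ {i}) = x_i − ν({i})`. -/
theorem equal_propensity_to_disrupt {N : Type*} [Fintype N] [DecidableEq N]
    [Nonempty N]
    (c : N → N → ℝ) (hsym : ∀ i j, c i j = c j i)
    (ν : Finset N → ℝ)
    (hν : ∀ S : Finset N, ν S = (∑ p ∈ S.offDiag, c p.1 p.2) / 2)
    (x : N → ℝ)
    (hx : ∀ i, x i = (1 / 2) * ∑ j ∈ Finset.univ.erase i, c i j)
    (i : N) :
    ∑ j ∈ Finset.univ.erase i, x j - ν (Finset.univ.erase i) = x i - ν {i} :=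
  equal_propensity_to_disrupt_general c hsym ν hν x hx i
end

section
/- For the pairwise-similarity TU game ν, the τ-value coincides with the Shapley value: for every player i, (1/2) · (ν(N) − ν(N \ {i})) + (1/2) · ν({i}) = (1/2) · Σ_{j ∈ N, j ≠ i} c(i,j) = φ_i(ν). Equivalently, with M_i(ν) = ν(N) − ν(N\{i}) and m_i(ν) = ν({i}) = 0, the convex combination λ·M_i(ν) + (1−λ)·m_i(ν) with λ = 1/2 is efficient (sums to ν(N)) and equals the Shapley value. -/
/-!
The marginal contribution of `i` to a coalition `S` is `∑ j ∈ S, c i j`, so the Shapley value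
of `i` is `∑ j ≠ i, c i j` times the total Shapley weight of the coalitions containing a fixed
`j`. Complementation `S ↦ U \ S` inside `U = N \ {i}` preserves the weights and swaps the
coalitions containing `j` with those avoiding it, while all weights add up to `1`; hence that
total weight is `1/2`, which is also the coefficient of the τ-value.
-/

open Finset

open scoped Nat

section

variable {α : Type*}

/-- `m` counts the players other than the one being valued, so `m + 1 = |N|`. -/
noncomputable def shapleyWeight (m k : ℕ) : ℝ := (k ! * (m - k)! : ℝ) / (m + 1)!

lemma shapleyWeight_sub_self {m k : ℕ} (hk : k ≤ m) :
    shapleyWeight m (m - k) = shapleyWeight m k := by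
  rw [shapleyWeight, shapleyWeight, Nat.sub_sub_self hk, mul_comm]

lemma choose_mul_shapleyWeight {m k : ℕ} (hk : k ≤ m) :
    (m.choose k : ℝ) * shapleyWeight m k = 1 / (m + 1) := by
  have hchoose : (m.choose k * k ! * (m - k)! : ℝ) = m ! := by
    exact_mod_cast Nat.choose_mul_factorial_mul_factorial hk
  have hm : (m ! : ℝ) ≠ 0 := by positivity
  calc (m.choose k : ℝ) * shapleyWeight m k = (m.choose k * k ! * (m - k)! : ℝ) / (m + 1)! := by
        rw [shapleyWeight]; ring
    _ = 1 / (m + 1) := by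
        rw [hchoose, Nat.factorial_succ]
        push_cast
        field_simp

lemma sum_shapleyWeight_powerset (U : Finset α) :
    ∑ S ∈ U.powerset, shapleyWeight #U #S = 1 := by
  rw [sum_powerset_apply_card (shapleyWeight #U)]
  have hterm : ∀ k ∈ range (#U + 1), (#U).choose k • shapleyWeight #U k = 1 / (#U + 1) :=
    fun k hk ↦ by
      rw [nsmul_eq_mul, choose_mul_shapleyWeight (Nat.lt_succ_iff.1 (mem_range.1 hk))]
  rw [sum_congr rfl hterm, sum_const, card_range, nsmul_eq_mul]
  push_cast
  field_simp

lemma sum_shapleyWeight_filter_mem [DecidableEq α] {U : Finset α} {j : α}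
    (hj : j ∈ U) :
    ∑ S ∈ U.powerset with j ∈ S, shapleyWeight #U #S = 1 / 2 := by
  have hcompl : ∑ S ∈ U.powerset with j ∈ S, shapleyWeight #U #S
      = ∑ S ∈ U.powerset with j ∉ S, shapleyWeight #U #S := by
    refine sum_nbij' (U \ ·) (U \ ·) ?_ ?_ ?_ ?_ ?_ <;>
      simp only [mem_filter, mem_powerset]
    · exact fun S _ ↦ ⟨sdiff_subset, by simp [*]⟩
    · exact fun S _ ↦ ⟨sdiff_subset, by simp [*]⟩
    · exact fun S hS ↦ Finset.sdiff_sdiff_eq_self hS.1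
    · exact fun S hS ↦ Finset.sdiff_sdiff_eq_self hS.1
    · intro S hS
      rw [card_sdiff_of_subset hS.1, shapleyWeight_sub_self (card_le_card hS.1)]
  have htotal := sum_filter_add_sum_filter_not U.powerset (j ∈ ·) (shapleyWeight #U <| #·)
  rw [sum_shapleyWeight_powerset, ← hcompl] at htotal
  linarith

lemma sum_powerset_mul_sum_eq {R : Type*} [DecidableEq α] [CommSemiring R] (U : Finset α)
    (w : Finset α → R) (g : α → R) :
    ∑ S ∈ U.powerset, w S * ∑ j ∈ S, g j = ∑ j ∈ U, (∑ S ∈ U.powerset with j ∈ S, w S) * g j := by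
  simp only [mul_sum, sum_mul]
  refine sum_comm' fun S j ↦ ?_
  simp only [mem_powerset, mem_filter]
  exact ⟨fun ⟨hS, hj⟩ ↦ ⟨⟨hS, hj⟩, hS hj⟩, fun ⟨⟨hS, hj⟩, _⟩ ↦ ⟨hS, hj⟩⟩

lemma sum_offDiag_insert {M : Type*} [DecidableEq α] [AddCommMonoid M] (f : α × α → M)
    {S : Finset α} {i : α} (hi : i ∉ S) :
    ∑ p ∈ (insert i S).offDiag, f p = ∑ p ∈ S.offDiag, f p + ∑ j ∈ S, (f (i, j) + f (j, i)) := by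
  have hdisj₁ : Disjoint S.offDiag ({i} ×ˢ S) := by
    simp only [disjoint_left, mem_offDiag, mem_product, mem_singleton]
    rintro p ⟨hp, -, -⟩ ⟨rfl, -⟩
    exact hi hp
  have hdisj₂ : Disjoint (S.offDiag ∪ {i} ×ˢ S) (S ×ˢ {i}) := by
    simp only [disjoint_left, mem_union, mem_offDiag, mem_product, mem_singleton]
    rintro p (⟨-, hp, -⟩ | ⟨-, hp⟩) ⟨-, rfl⟩ <;> exact hi hp
  rw [offDiag_insert hi, sum_union hdisj₂, sum_union hdisj₁, sum_product, sum_product,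
    sum_singleton, sum_add_distrib, add_assoc]
  simp only [sum_singleton]

/-- For symmetric `c`, summing over unordered pairs is half the sum over ordered pairs. -/
noncomputable def pairGame (c : α → α → ℝ) (S : Finset α) : ℝ :=
  (∑ p ∈ S.offDiag, c p.1 p.2) / 2

lemma pairGame_insert_sub [DecidableEq α] {c : α → α → ℝ}
    (hsym : ∀ i j, c i j = c j i) {S : Finset α} {i : α} (hi : i ∉ S) :
    pairGame c (insert i S) - pairGame c S = ∑ j ∈ S, c i j := by
  rw [pairGame, pairGame, sum_offDiag_insert (fun p ↦ c p.1 p.2) hi]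
  simp only [← hsym i, ← two_mul, ← mul_sum]
  ring

lemma pairGame_singleton (c : α → α → ℝ) (i : α) : pairGame c {i} = 0 := by
  simp [pairGame]

end

theorem tau_value_eq_shapley_general {N : Type*} [Fintype N] [DecidableEq N]
    (c : N → N → ℝ) (hsym : ∀ i j, c i j = c j i)
    (ν : Finset N → ℝ)
    (hν : ∀ S : Finset N, ν S = (∑ p ∈ S.offDiag, c p.1 p.2) / 2)
    (i : N) :
    (1 / 2) * (ν Finset.univ - ν (Finset.univ.erase i)) + (1 / 2) * ν {i}
        = (1 / 2) * ∑ j ∈ Finset.univ.erase i, c i j ∧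
    (1 / 2) * ∑ j ∈ Finset.univ.erase i, c i j
        = ∑ S ∈ (Finset.univ.erase i).powerset,
            ((S.card.factorial : ℝ) * ((Fintype.card N - 1 - S.card).factorial : ℝ) /
              ((Fintype.card N).factorial : ℝ)) * (ν (insert i S) - ν S) := by
  obtain rfl : ν = pairGame c := funext hν
  set U := univ.erase i
  have hcard : Fintype.card N = #U + 1 := (card_erase_add_one (mem_univ i)).symm
  have hmarginal : ∀ S ∈ U.powerset, pairGame c (insert i S) - pairGame c S = ∑ j ∈ S, c i j :=
    fun S hS ↦ pairGame_insert_sub hsym fun hi ↦ notMem_erase i univ (mem_powerset.1 hS hi)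
  constructor
  · have huniv : univ = insert i U := (insert_erase (mem_univ i)).symm
    rw [huniv, pairGame_insert_sub hsym (notMem_erase i univ), pairGame_singleton]
    ring
  · have hweight : ∀ S : Finset N, (S.card ! * (Fintype.card N - 1 - S.card)! : ℝ)
        / (Fintype.card N)! = shapleyWeight #U #S := by
      simp [shapleyWeight, hcard]
    calc (1 / 2) * ∑ j ∈ U, c i j
        = ∑ j ∈ U, (∑ S ∈ U.powerset with j ∈ S, shapleyWeight #U #S) * c i j := by
          rw [mul_sum]
          exact sum_congr rfl fun j hj ↦ by rw [sum_shapleyWeight_filter_mem hj]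
      _ = ∑ S ∈ U.powerset, shapleyWeight #U #S * ∑ j ∈ S, c i j :=
          (sum_powerset_mul_sum_eq U _ _).symm
      _ = _ := sum_congr rfl fun S hS ↦ by rw [hweight, hmarginal S hS]

/-- For the pairwise-similarity TU game
`ν(S) = Σ_{{i,j} ⊆ S, i ≠ j} c(i,j)` (with `c` symmetric), the τ-value (with
`λ = 1/2`, `M_i(ν) = ν(N) − ν(N\{i})` and `m_i(ν) = ν({i})`) coincides with the
Shapley value: for every player `i`,
`(1/2)·(ν(N) − ν(N\{i})) + (1/2)·ν({i}) = (1/2)·Σ_{j ≠ i} c(i,j) = φ_i(ν)`. -/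
theorem tau_value_eq_shapley {N : Type*} [Fintype N] [DecidableEq N] [Nonempty N]
    (c : N → N → ℝ) (hsym : ∀ i j, c i j = c j i)
    (ν : Finset N → ℝ)
    (hν : ∀ S : Finset N, ν S = (∑ p ∈ S.offDiag, c p.1 p.2) / 2)
    (i : N) :
    (1 / 2) * (ν Finset.univ - ν (Finset.univ.erase i)) + (1 / 2) * ν {i}
        = (1 / 2) * ∑ j ∈ Finset.univ.erase i, c i j ∧
    (1 / 2) * ∑ j ∈ Finset.univ.erase i, c i j
        = ∑ S ∈ (Finset.univ.erase i).powerset,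
            ((S.card.factorial : ℝ) * ((Fintype.card N - 1 - S.card).factorial : ℝ) /
              ((Fintype.card N).factorial : ℝ)) * (ν (insert i S) - ν S) :=
  tau_value_eq_shapley_general c hsym ν hν i
end

section
/- For every r ≥ 1, the maximum possible Footrule distance between two preferences on r alternatives equals 2·⌈r/2⌉·⌊r/2⌋; that is, max over permutations p, q of {1,…,r} of Σ_{a=1}^{r} |p(a) − q(a)| = 2·⌈r/2⌉·⌊r/2⌋. -/
/-!
Let `m = ⌊r/2⌋` be the median position. The distances `dist x m` of all positions `x < r` to `m`
add up to `⌈r/2⌉·⌊r/2⌋`. Routing `|p a - q a|` through `m` by the triangle inequality therefore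
bounds the Footrule distance by twice that sum. The reversal of the identity attains the bound,
because `a` and `r - 1 - a` always lie on opposite sides of `m`.
-/

open Finset

theorem Nat.sum_range_dist_half : ∀ r : ℕ,
    ∑ v ∈ range r, Nat.dist v (r / 2) = (r + 1) / 2 * (r / 2)
  | 0 => rfl
  | 1 => rfl
  | n + 2 => by
    have hshift : ∑ v ∈ range (n + 2), Nat.dist v (n / 2 + 1)
        = ∑ v ∈ range n, Nat.dist v (n / 2) + (n + 1) := by
      rw [sum_range_succ', sum_range_succ]
      simp only [Nat.dist_succ_succ, Nat.dist_zero_left]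
      rw [Nat.dist_eq_sub_of_le_right (Nat.div_le_self n 2)]
      omega
    have hhalves : (n + 1) / 2 + n / 2 = n := by omega
    rw [show (n + 2) / 2 = n / 2 + 1 by omega, show (n + 2 + 1) / 2 = (n + 1) / 2 + 1 by omega,
      hshift, Nat.sum_range_dist_half n]
    nlinarith

namespace Equiv.Perm

variable {r : ℕ}

def footrule (p q : Perm (Fin r)) : ℕ :=
  ∑ a, Nat.dist (p a) (q a)

theorem sum_dist_half (σ : Perm (Fin r)) :
    ∑ a, Nat.dist (σ a) (r / 2) = (r + 1) / 2 * (r / 2) := by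
  rw [Equiv.sum_comp σ (fun x : Fin r ↦ Nat.dist x (r / 2)),
    Fin.sum_univ_eq_sum_range (fun v ↦ Nat.dist v (r / 2)), Nat.sum_range_dist_half]

theorem sum_dist_half_add_dist_half (p q : Perm (Fin r)) :
    ∑ a, (Nat.dist (p a) (r / 2) + Nat.dist (q a) (r / 2)) = 2 * ((r + 1) / 2) * (r / 2) := by
  rw [sum_add_distrib, sum_dist_half, sum_dist_half]
  ring

theorem footrule_le (p q : Perm (Fin r)) : footrule p q ≤ 2 * ((r + 1) / 2) * (r / 2) :=
  (sum_le_sum fun _ _ ↦ (Nat.dist.triangle_inequality _ (r / 2) _).trans_eq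
    (congrArg _ (Nat.dist_comm _ _))).trans_eq (sum_dist_half_add_dist_half p q)

theorem footrule_revPerm_one :
    footrule (Fin.revPerm : Perm (Fin r)) 1 = 2 * ((r + 1) / 2) * (r / 2) := by
  refine (sum_congr rfl fun a _ ↦ ?_).trans (sum_dist_half_add_dist_half Fin.revPerm 1)
  have hrev : (a.rev : ℕ) = r - (a + 1) := Fin.val_rev a
  have ha : (a : ℕ) < r := a.isLt
  simp only [Fin.revPerm_apply, one_apply, Nat.dist]
  omega

end Equiv.Perm

theorem max_footrule_distance_general (r : ℕ) :
    IsGreatest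
      {d : ℕ | ∃ p q : Equiv.Perm (Fin r), d = ∑ a : Fin r, Nat.dist (p a) (q a)}
      (2 * ((r + 1) / 2) * (r / 2)) :=
  ⟨⟨Fin.revPerm, 1, Equiv.Perm.footrule_revPerm_one.symm⟩,
    fun _ ⟨p, q, hd⟩ ↦ hd ▸ Equiv.Perm.footrule_le p q⟩

/-- For every `r ≥ 1`, the maximum possible Footrule distance
between two preferences (permutations of `{1,…,r}`) equals
`2·⌈r/2⌉·⌊r/2⌋`; i.e. the greatest element of the set of values
`Σ_a |p(a) − q(a)|` over permutations `p, q` is `2·⌈r/2⌉·⌊r/2⌋`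
(in ℕ, `⌈r/2⌉ = (r+1)/2` and `⌊r/2⌋ = r/2`). -/
theorem max_footrule_distance (r : ℕ) (hr : 1 ≤ r) :
    IsGreatest
      {d : ℕ | ∃ p q : Equiv.Perm (Fin r), d = ∑ a : Fin r, Nat.dist (p a) (q a)}
      (2 * ((r + 1) / 2) * (r / 2)) :=
  max_footrule_distance_general r
end
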